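/- For any ring R and any index set A, the product functor from the A-indexed product of copies of the category of R-modules to the category of R-modules, sending a family (M_a)_{a∈A} to the product module ∏_{a∈A} M_a, is a monadic functor (its left adjoint is the diagonal functor V ↦ (V)_{a∈A}). -/

import Mathlib

open CategoryTheory

universe u

variable (R : Type u) [Ring R] (A : Type u)

/-- The product functor `(Mod R)^A ⥤ Mod R`, `(M_a)_{a ∈ A} ↦ ∏_a M_a`. -/
@[simps]
def productFunctor : (∀ _ : A, ModuleCat.{u} R) ⥤ ModuleCat.{u} R where
  obj M := ModuleCat.of R (∀ a, M a)
  map f := ModuleCat.ofHom (LinearMap.pi (fun a => (f a).hom.comp (LinearMap.proj a)))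
  map_id := by intros; rfl
  map_comp := by intros; rfl

/-- The diagonal functor `Mod R ⥤ (Mod R)^A`, `V ↦ (V)_{a ∈ A}`. -/
@[simps]
def diagonalFunctor : ModuleCat.{u} R ⥤ (∀ _ : A, ModuleCat.{u} R) where
  obj V := fun _ => V
  map f := fun _ => f

/-! The crude monadicity theorem applies, `(Mod R)^A` being cocomplete.
Up to isomorphism the product functor is `Pi.functor A`, which preserves finite colimits because
products of modules are exact (AB4*), and which reflects isomorphisms because `f a` is a retract
of `∏ f` through the inclusion and the projection at `a`. -/

open Limits

universe v

namespace CategoryTheory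

instance Pi.hasColimitsOfSize {C : Type*} [Category.{v} C] [HasColimitsOfSize.{v, v} C]
    (α : Type v) : HasColimitsOfSize.{v, v} (α → C) :=
  Adjunction.has_colimits_of_equivalence (piEquivalenceFunctorDiscrete α C).functor

namespace Limits

variable {C : Type*} [Category C] {α : Type*} [HasProductsOfShape α C]

instance [HasExactLimitsOfShape (Discrete α) C] :
    PreservesFiniteColimits (Pi.functor (C := C) α) :=
  preservesFiniteColimits_of_natIso (piEquivalenceFunctorDiscreteCompLim α)

section ZeroMorphisms

variable [HasZeroMorphisms C] [DecidableEq α] {X Y : α → C} (f : X ⟶ Y)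

lemma Pi.ι_comp_map (a : α) : Pi.ι X a ≫ Pi.map f = f a ≫ Pi.ι Y a :=
  Pi.hom_ext _ _ fun b => by
    by_cases h : a = b
    · subst h; simp
    · simp [Pi.ι_π_of_ne _ h, Pi.ι_π_of_ne_assoc _ h]

noncomputable def Pi.retractArrowMap (a : α) : RetractArrow (f a) ((Pi.functor α).map f) where
  i := Arrow.homMk (Pi.ι X a) (Pi.ι Y a) (Pi.ι_comp_map f a)
  r := Arrow.homMk (Pi.π X a) (Pi.π Y a) (Pi.map_π f a).symm
  retract := Arrow.hom_ext _ _ (Pi.ι_π_eq_id X a) (Pi.ι_π_eq_id Y a)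

end ZeroMorphisms

instance [HasZeroMorphisms C] : (Pi.functor (C := C) α).ReflectsIsomorphisms where
  reflects f _ := by
    classical
    rw [isIso_pi_iff]
    exact fun a => MorphismProperty.of_retract (P := .isomorphisms C) (Pi.retractArrowMap f a) ‹_›

end Limits

end CategoryTheory

variable {R A}

def diagonalProductAdjunction : diagonalFunctor R A ⊣ productFunctor R A :=
  Adjunction.mkOfHomEquiv
    { homEquiv V M :=
        { toFun f := ModuleCat.ofHom (LinearMap.pi fun a => (f a).hom)
          invFun g a := ModuleCat.ofHom ((LinearMap.proj a).comp g.hom)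
          left_inv _ := rfl
          right_inv _ := rfl } }

noncomputable def productFunctorIsoPiFunctor : productFunctor R A ≅ Pi.functor A :=
  NatIso.ofComponents (fun M => (ModuleCat.piIsoPi M).symm) fun f => Pi.hom_ext _ _ fun a => by
    -- `erw`: `(productFunctor R A).obj M` is `ModuleCat.of R (∀ a, M a)` only up to unfolding
    erw [Category.assoc, Category.assoc, ModuleCat.piIsoPi_inv_kernel_ι, Pi.functor_map, Pi.map_π,
      ← Category.assoc, ModuleCat.piIsoPi_inv_kernel_ι]
    rfl

instance : PreservesFiniteColimits (productFunctor R A) :=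
  preservesFiniteColimits_of_natIso productFunctorIsoPiFunctor.symm

instance : (productFunctor R A).ReflectsIsomorphisms :=
  reflectsIsomorphisms_of_iso productFunctorIsoPiFunctor.symm

instance : Monad.PreservesColimitOfIsReflexivePair (productFunctor R A) :=
  ⟨fun _ _ _ _ _ => inferInstance⟩

/-- The product functor `(Mod R)^A ⥤ Mod R` is monadic; its left
adjoint is the diagonal functor. -/
theorem productFunctor_monadic :
    Nonempty (diagonalFunctor R A ⊣ productFunctor R A) ∧
      Nonempty (MonadicRightAdjoint (productFunctor R A)) :=
  ⟨⟨diagonalProductAdjunction⟩,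
    ⟨Monad.monadicOfHasPreservesReflexiveCoequalizersOfReflectsIsomorphisms
      diagonalProductAdjunction⟩⟩
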